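/- arXiv:2412.14765 — 7 statements merged into one kernel-verified Lean document; each statement's English description precedes it below -/
import Mathlib

section
/- Let G be a group, g ∈ G, and let K be the normal subgroup of G generated by g. If T is a (left) transversal of C_G(g)·K in G, then the abelianization K/[K,K] is generated by the images of the conjugates g^t for t ∈ T. In particular, if the index |G : C_G(g)K| is finite, then K/[K,K] is generated by at most |G : C_G(g)K| elements. -/
/-!
Every conjugate `x g x⁻¹` with `x = t k c`, `t ∈ T`, `k ∈ K`, `c ∈ C_G(g)`, equals the
`K`-conjugate `(t k t⁻¹) (t g t⁻¹) (t k t⁻¹)⁻¹` of `t g t⁻¹`, so it has the same image as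
`t g t⁻¹` in the abelianization of `K`. Since the conjugates of `g` generate `K`, the images of
the `t g t⁻¹` generate `Kᵃᵇ`, and there are at most `|T| = |G : C_G(g)K|` of them.
-/

open Subgroup

section

variable {G : Type*} [Group G]

theorem Abelianization.of_mul_mul_inv (a b : G) : of (a * b * a⁻¹) = of b := by
  rw [map_mul, map_mul, map_inv, mul_comm (of a), mul_inv_cancel_right]

theorem Subgroup.closure_range_conjNormal_eq_top {K : Subgroup G} [K.Normal] (k : K)
    (hK : K = normalClosure {(k : G)}) :
    closure (Set.range fun x : G ↦ MulAut.conjNormal x k) = ⊤ := by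
  apply map_injective K.subtype_injective
  rw [MonoidHom.map_closure, ← MonoidHom.range_eq_map, range_subtype]
  have : K.subtype '' Set.range (fun x : G ↦ MulAut.conjNormal x k) =
      Group.conjugatesOfSet {(k : G)} := by
    ext y
    simp [Group.mem_conjugatesOfSet_iff, isConj_iff, MulAut.conjNormal_apply]
  rw [this]
  exact hK.symm

theorem Abelianization.closure_range_of_conjNormal_eq_top {K : Subgroup G} [K.Normal] (k : K)
    (hK : K = normalClosure {(k : G)}) :
    closure (Set.range fun x : G ↦ of (MulAut.conjNormal x k)) = ⊤ := by
  rw [Set.range_comp' of, ← MonoidHom.map_closure, closure_range_conjNormal_eq_top k hK,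
    ← MonoidHom.range_eq_map, MonoidHom.range_eq_top]
  exact Quotient.mk''_surjective

theorem Abelianization.of_conjNormal_mul_of_mem {K : Subgroup G} [K.Normal] (k : K) (x : G)
    {y : G} (hy : y ∈ centralizer {(k : G)} ⊔ K) :
    of (MulAut.conjNormal (x * y) k) = of (MulAut.conjNormal x k) := by
  rw [← SetLike.mem_coe, sup_comm, normal_mul] at hy
  obtain ⟨n, hn, c, hc, rfl⟩ := hy
  have hck : MulAut.conjNormal c k = k := by
    ext
    rw [MulAut.conjNormal_apply, mem_centralizer_singleton_iff.mp hc, mul_inv_cancel_right]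
  have hnk : MulAut.conjNormal n k = ⟨n, hn⟩ * k * (⟨n, hn⟩ : K)⁻¹ := by
    ext; exact MulAut.conjNormal_apply n k
  rw [← mul_assoc, map_mul, map_mul, MulAut.mul_apply, MulAut.mul_apply, hck, hnk,
    map_mul (MulAut.conjNormal x), map_mul (MulAut.conjNormal x), map_inv (MulAut.conjNormal x),
    of_mul_mul_inv]

theorem Subgroup.IsComplement.image_eq_range {α : Type*} {H : Subgroup G} {T : Set G}
    (hT : IsComplement T H) {f : G → α} (hf : ∀ x, ∀ y ∈ H, f (x * y) = f x) :
    f '' T = Set.range f := by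
  refine (Set.image_subset_range f T).antisymm ?_
  rintro _ ⟨x, rfl⟩
  obtain ⟨⟨t, ht⟩, htx, -⟩ := isComplement_iff_existsUnique_inv_mul_mem.mp hT x
  exact ⟨t, ht, by rw [← hf t _ htx, mul_inv_cancel_left]⟩

end

/-- Let `G` be a group, `g ∈ G`, and `K` the normal subgroup of `G`
generated by `g`.  If `T` is a left transversal of `C_G(g)·K` in `G`, then the
abelianization of `K` is generated by the images of the conjugates `t * g * t⁻¹` for
`t ∈ T`.  In particular, if the index `|G : C_G(g)K|` is finite, then the abelianization
of `K` is generated by at most `|G : C_G(g)K|` elements. -/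
theorem stmt0 (G : Type*) [Group G] (g : G)
    (K : Subgroup G) (hK : K = Subgroup.normalClosure {g})
    (T : Set G)
    (hT : Subgroup.IsComplement T
      ((Subgroup.centralizer {g} ⊔ K : Subgroup G) : Set G)) :
    Subgroup.closure
      {x : Abelianization K |
        ∃ t ∈ T, ∃ h : t * g * t⁻¹ ∈ K, x = Abelianization.of ⟨t * g * t⁻¹, h⟩} = ⊤ ∧
    ((Subgroup.centralizer {g} ⊔ K : Subgroup G).index ≠ 0 →
      ∃ S : Finset (Abelianization K),
        S.card ≤ (Subgroup.centralizer {g} ⊔ K : Subgroup G).index ∧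
        Subgroup.closure (S : Set (Abelianization K)) = ⊤) := by
  have hKn : K.Normal := hK ▸ normalClosure_normal
  have hg : g ∈ K := hK ▸ subset_normalClosure rfl
  set f : G → Abelianization K := fun x ↦ Abelianization.of (MulAut.conjNormal x ⟨g, hg⟩)
  have hconj (t : G) : MulAut.conjNormal t ⟨g, hg⟩ = ⟨t * g * t⁻¹, hKn.conj_mem g hg t⟩ :=
    Subtype.ext (MulAut.conjNormal_apply t _)
  have hgens : {x : Abelianization K |
      ∃ t ∈ T, ∃ h : t * g * t⁻¹ ∈ K, x = Abelianization.of ⟨t * g * t⁻¹, h⟩} = f '' T := by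
    ext x
    constructor
    · rintro ⟨t, ht, -, rfl⟩
      exact ⟨t, ht, congrArg Abelianization.of (hconj t)⟩
    · rintro ⟨t, ht, rfl⟩
      exact ⟨t, ht, _, congrArg Abelianization.of (hconj t)⟩
  have hclosure : closure (f '' T) = ⊤ := by
    rw [hT.image_eq_range (f := f) fun x _ ↦ Abelianization.of_conjNormal_mul_of_mem ⟨g, hg⟩ x]
    exact Abelianization.closure_range_of_conjNormal_eq_top ⟨g, hg⟩ hK
  refine ⟨hgens ▸ hclosure, fun hindex ↦ ?_⟩
  have hTfin : T.Finite := Set.finite_of_ncard_ne_zero (hT.ncard_left ▸ hindex)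
  refine ⟨(hTfin.image f).toFinset, ?_, by rwa [Set.Finite.coe_toFinset]⟩
  rw [← Set.ncard_eq_toFinset_card _ (hTfin.image f), ← hT.ncard_left]
  exact Set.ncard_image_le hTfin
end

section
/- Let Γ be an infinite, finitely generated, residually finite group in which every finitely generated subgroup is either finite or of finite index (locally zero-one). If Γ is not locally finite, then Γ has a just infinite quotient Γ/N such that N is locally finite. -/
/-!
A finite-index subgroup of a finitely generated group is finitely generated (Schreier), so the
union of a chain of infinite-index normal subgroups again has infinite index. Zorn's lemma then
gives a normal subgroup `N` maximal among those of infinite index, and `Γ ⧸ N` is just infinite by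
the correspondence theorem. A finitely generated subgroup of `N` has infinite index, so it is
finite when `Γ` is locally zero-one.
-/

/-- A group is just infinite if it is infinite and every nontrivial normal subgroup has
finite index. -/
def IsJustInfinite (G : Type*) [Group G] : Prop :=
  Infinite G ∧ ∀ N : Subgroup G, N.Normal → N ≠ ⊥ → N.index ≠ 0

/-- A group is residually finite if every nontrivial element survives in some finite
quotient. -/
def IsResiduallyFinite (G : Type*) [Group G] : Prop :=
  ∀ g : G, g ≠ 1 → ∃ N : Subgroup G, N.Normal ∧ N.index ≠ 0 ∧ g ∉ N

namespace Subgroup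

variable {G : Type*} [Group G]

theorem index_eq_zero_of_le {H K : Subgroup G} (h : H ≤ K) (hK : K.index = 0) : H.index = 0 :=
  Nat.eq_zero_of_zero_dvd (hK ▸ index_dvd_of_le h)

theorem FG.exists_le_of_le_sSup {H : Subgroup G} (hH : H.FG) {K : Set (Subgroup G)}
    (hne : K.Nonempty) (hK : DirectedOn (· ≤ ·) K) (hle : H ≤ sSup K) :
    ∃ M ∈ K, H ≤ M := by
  obtain ⟨T, rfl⟩ := hH
  have hT : (T : Set G) ⊆ ⋃ M ∈ K, (M : Set G) := fun x hx => by
    obtain ⟨M, hM, hxM⟩ := (mem_sSup_of_directedOn hne hK).mp (hle (subset_closure hx))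
    exact Set.mem_biUnion hM hxM
  obtain ⟨M, hM, hTM⟩ := hK.exists_mem_subset_of_finset_subset_biUnion hne hT
  exact ⟨M, hM, (closure_le M).mpr hTM⟩

theorem index_sSup_eq_zero_of_directedOn [Group.FG G] {K : Set (Subgroup G)}
    (hne : K.Nonempty) (hK : DirectedOn (· ≤ ·) K) (hzero : ∀ M ∈ K, M.index = 0) :
    (sSup K).index = 0 := by
  by_contra h
  have : (sSup K).FiniteIndex := ⟨h⟩
  obtain ⟨M, hM, hle⟩ := ((Group.fg_iff_subgroup_fg _).mp inferInstance).exists_le_of_le_sSup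
    hne hK le_rfl
  exact h (index_eq_zero_of_le hle (hzero M hM))

theorem exists_maximal_normal_index_eq_zero [Group.FG G] [Infinite G] :
    ∃ N : Subgroup G, Maximal (fun N : Subgroup G => N.Normal ∧ N.index = 0) N := by
  obtain ⟨N, -, hN⟩ := zorn_le_nonempty₀ {N : Subgroup G | N.Normal ∧ N.index = 0}
    (fun c hc hchain M hM => ⟨sSup c,
      ⟨sSup_normal c fun N hN => (hc hN).1,
        index_sSup_eq_zero_of_directedOn ⟨M, hM⟩ hchain.directedOn fun N hN => (hc hN).2⟩,
      fun _ => le_sSup⟩)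
    ⊥ ⟨inferInstance, by rw [index_bot, Nat.card_eq_zero_of_infinite]⟩
  exact ⟨N, hN⟩

theorem isJustInfinite_quotient_of_maximal {N : Subgroup G} [N.Normal]
    (hN : Maximal (fun N : Subgroup G => N.Normal ∧ N.index = 0) N) :
    IsJustInfinite (G ⧸ N) := by
  refine ⟨index_eq_zero_iff_infinite.mp hN.prop.2, fun M hM hMne hMidx => hMne ?_⟩
  have hsurj := QuotientGroup.mk'_surjective N
  have hle : N ≤ M.comap (QuotientGroup.mk' N) := fun x hx => by
    simp [(QuotientGroup.eq_one_iff x).mpr hx]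
  have hcomap : M.comap (QuotientGroup.mk' N) ≤ N :=
    hN.2 ⟨hM.comap _, by rwa [index_comap_of_surjective _ hsurj]⟩ hle
  rw [eq_bot_iff, ← map_comap_eq_self_of_surjective hsurj M, ← QuotientGroup.map_mk'_self N]
  exact map_mono hcomap

end Subgroup

theorem stmt5_general (Γ : Type*) [Group Γ] [Infinite Γ] (hfg : Group.FG Γ)
    (hzo : ∀ H : Subgroup Γ, Group.FG H → (Finite H ∨ H.index ≠ 0)) :
    ∃ N : Subgroup Γ, N.Normal ∧
      (∀ hN : N.Normal, IsJustInfinite (Γ ⧸ N)) ∧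
      (∀ H : Subgroup Γ, H ≤ N → Group.FG H → Finite H) := by
  obtain ⟨N, hN⟩ := Subgroup.exists_maximal_normal_index_eq_zero (G := Γ)
  refine ⟨N, hN.prop.1, fun _ => Subgroup.isJustInfinite_quotient_of_maximal hN,
    fun H hHN hH =>
      (hzo H hH).resolve_right (not_not.mpr (Subgroup.index_eq_zero_of_le hHN hN.prop.2))⟩

/-- Let `Γ` be an infinite, finitely generated, residually finite group
in which every finitely generated subgroup is either finite or of finite index
("locally zero-one").  If `Γ` is not locally finite, then `Γ` has a just infinite
quotient `Γ ⧸ N` with `N` locally finite. -/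
theorem stmt5 (Γ : Type*) [Group Γ] [Infinite Γ] (hfg : Group.FG Γ)
    (hrf : IsResiduallyFinite Γ)
    (hzo : ∀ H : Subgroup Γ, Group.FG H → (Finite H ∨ H.index ≠ 0))
    (hnlf : ¬ (∀ H : Subgroup Γ, Group.FG H → Finite H)) :
    ∃ N : Subgroup Γ, N.Normal ∧
      (∀ hN : N.Normal, IsJustInfinite (Γ ⧸ N)) ∧
      (∀ H : Subgroup Γ, H ≤ N → Group.FG H → Finite H) :=
  stmt5_general Γ hfg hzo
end

section
/- Let dim be a Sylvester module rank function on a ring R, extended to finitely generated modules via dim M = inf { dim M' : M' finitely presented surjecting onto M }. Then for finitely generated modules the properties (SMod2) and (SMod3) still hold: dim(M₁ ⊕ M₂) = dim M₁ + dim M₂ for finitely generated M₁, M₂, and dim M₁ + dim M₃ ≥ dim M₂ ≥ dim M₃ for any exact sequence M₁ → M₂ → M₃ → 0 of finitely generated modules. -/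
/-- A Sylvester module rank function on a ring `R`: an assignment of a nonnegative real
number to each (bundled) `R`-module — only its values on finitely presented modules
matter — which is invariant under isomorphism of finitely presented modules and
satisfies `(SMod1)` `dim 0 = 0`, `dim R = 1`; `(SMod2)` additivity on direct sums; and
`(SMod3)` `dim M₃ ≤ dim M₂ ≤ dim M₁ + dim M₃` for exact sequences `M₁ → M₂ → M₃ → 0`
of finitely presented modules. -/
structure SylvesterRank (R : Type) [Ring R] where
  /-- the rank of a bundled `R`-module -/
  d : ModuleCat.{0} R → ℝ
  nonneg : ∀ M : ModuleCat.{0} R, Module.FinitePresentation R M → 0 ≤ d M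
  d_congr : ∀ M N : ModuleCat.{0} R, Module.FinitePresentation R M →
    Module.FinitePresentation R N → Nonempty (M ≃ₗ[R] N) → d M = d N
  d_zero : d (ModuleCat.of R PUnit) = 0
  d_one : d (ModuleCat.of R R) = 1
  d_add : ∀ M N : ModuleCat.{0} R, Module.FinitePresentation R M →
    Module.FinitePresentation R N → d (ModuleCat.of R (M × N)) = d M + d N
  d_exact : ∀ (M₁ M₂ M₃ : ModuleCat.{0} R), Module.FinitePresentation R M₁ →
    Module.FinitePresentation R M₂ → Module.FinitePresentation R M₃ →
    ∀ (f : M₁ →ₗ[R] M₂) (g : M₂ →ₗ[R] M₃), Function.Exact f g → Function.Surjective g →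
      d M₃ ≤ d M₂ ∧ d M₂ ≤ d M₁ + d M₃

/-- The extension of a Sylvester module rank function to arbitrary (in practice,
finitely generated) modules:
`dim M = inf { dim M′ : M′ finitely presented, M a quotient of M′ }`. -/
noncomputable def SylvesterRank.toFG {R : Type} [Ring R] (ρ : SylvesterRank R)
    (M : ModuleCat.{0} R) : ℝ :=
  sInf {x : ℝ | ∃ M' : ModuleCat.{0} R, Module.FinitePresentation R M' ∧
    (∃ f : M' →ₗ[R] M, Function.Surjective f) ∧ x = ρ.d M'}

/-!
Both inequalities come from comparing finitely presented covers. For `M₁ × M₂`, a product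
of covers of the factors covers the product; conversely a finitely presented cover `N` of
`M₁ × M₂` has finitely generated submodules `A ≤ ker (fst ∘ φ)`, `B ≤ ker (snd ∘ φ)` with
`A ⊔ B = ⊤`, so `N` surjects onto `N ⧸ A × N ⧸ B`, a product of finitely presented covers of
`M₁` and `M₂`. For an exact sequence `M₁ → M₂ → M₃ → 0` and finitely presented covers `N₁`,
`N₃` of `M₁`, `M₃`, a pushout of `N₁` with a finite free presentation of `N₃` gives a
finitely presented cover `N₂` of `M₂` in an exact sequence `N₁ → N₂ → N₃ → 0`, to which
(SMod3) applies.
-/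

open Function

section ModuleFacts

variable {R : Type*} [Ring R] {N M₁ M₂ : Type*} [AddCommGroup N] [Module R N]
  [AddCommGroup M₁] [Module R M₁] [AddCommGroup M₂] [Module R M₂]

theorem Module.FinitePresentation.quotient [Module.FinitePresentation R N] {W : Submodule R N}
    (hW : W.FG) : Module.FinitePresentation R (N ⧸ W) :=
  Module.finitePresentation_of_surjective W.mkQ W.mkQ_surjective (by rwa [Submodule.ker_mkQ])

theorem Module.projective_lifting_property_of_range_le {P : Type*} [AddCommGroup P] [Module R P]
    [Module.Projective R P] (f : M₁ →ₗ[R] M₂) (g : P →ₗ[R] M₂)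
    (h : LinearMap.range g ≤ LinearMap.range f) : ∃ l : P →ₗ[R] M₁, f ∘ₗ l = g := by
  obtain ⟨l, hl⟩ := Module.projective_lifting_property f.rangeRestrict
    (g.codRestrict (LinearMap.range f) fun x => h ⟨x, rfl⟩) f.surjective_rangeRestrict
  exact ⟨l, by ext x; simpa using congr(($hl x : M₂))⟩

theorem Submodule.exists_fg_le_le_sup_eq_top [Module.Finite R N] {K₁ K₂ : Submodule R N}
    (h : K₁ ⊔ K₂ = ⊤) : ∃ A B : Submodule R N, A ≤ K₁ ∧ B ≤ K₂ ∧ A.FG ∧ B.FG ∧ A ⊔ B = ⊤ := by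
  obtain ⟨s, hs⟩ := Module.Finite.fg_top (R := R) (M := N)
  have hsplit (x : s) : ∃ y ∈ K₁, ∃ z ∈ K₂, y + z = (x : N) :=
    Submodule.mem_sup.mp (h ▸ Submodule.mem_top)
  choose y hy z hz hyz using hsplit
  refine ⟨span R (Set.range y), span R (Set.range z), span_le.mpr (Set.range_subset_iff.mpr hy),
    span_le.mpr (Set.range_subset_iff.mpr hz), fg_span (Set.finite_range y),
    fg_span (Set.finite_range z), ?_⟩
  rw [eq_top_iff, ← hs, span_le]
  intro x hx
  rw [SetLike.mem_coe, show x = y ⟨x, hx⟩ + z ⟨x, hx⟩ from (hyz ⟨x, hx⟩).symm]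
  exact add_mem (mem_sup_left (subset_span ⟨_, rfl⟩)) (mem_sup_right (subset_span ⟨_, rfl⟩))

theorem LinearMap.ker_fst_comp_sup_ker_snd_comp {φ : N →ₗ[R] M₁ × M₂} (hφ : Surjective φ) :
    ker (fst R M₁ M₂ ∘ₗ φ) ⊔ ker (snd R M₁ M₂ ∘ₗ φ) = ⊤ := by
  refine eq_top_iff.mpr fun n _ => ?_
  obtain ⟨n', hn'⟩ := hφ (0, (φ n).2)
  refine Submodule.mem_sup.mpr ⟨n', ?_, n - n', ?_, add_sub_cancel n' n⟩ <;> simp [hn']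

theorem Submodule.liftQ_surjective {W : Submodule R N} {f : N →ₗ[R] M₁} (hf : Surjective f)
    (hW : W ≤ LinearMap.ker f) : Surjective (W.liftQ f hW) := by
  rw [← LinearMap.range_eq_top, range_liftQ, LinearMap.range_eq_top.mpr hf]

end ModuleFacts

theorem exists_finitePresentation_cover_exact {R : Type} [Ring R] {M₁ M₂ M₃ : Type*}
    [AddCommGroup M₁] [Module R M₁] [AddCommGroup M₂] [Module R M₂] [AddCommGroup M₃]
    [Module R M₃] {f : M₁ →ₗ[R] M₂} {g : M₂ →ₗ[R] M₃} (hfg : Exact f g) (hg : Surjective g)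
    {N₁ N₃ : ModuleCat.{0} R} [Module.FinitePresentation R N₁] [Module.FinitePresentation R N₃]
    {q₁ : N₁ →ₗ[R] M₁} (hq₁ : Surjective q₁) {q₃ : N₃ →ₗ[R] M₃} (hq₃ : Surjective q₃) :
    ∃ N₂ : ModuleCat.{0} R, Module.FinitePresentation R N₂ ∧
      (∃ q₂ : N₂ →ₗ[R] M₂, Surjective q₂) ∧
      ∃ (ι : N₁ →ₗ[R] N₂) (ψ : N₂ →ₗ[R] N₃), Exact ι ψ ∧ Surjective ψ := by
  obtain ⟨n, m, π, κ, hπ, hκπ⟩ := Module.FinitePresentation.exists_fin' R N₃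
  obtain ⟨h, hh⟩ := Module.projective_lifting_property g (q₃ ∘ₗ π) hg
  have hrange : LinearMap.range (f ∘ₗ q₁) = LinearMap.ker g := by
    rw [LinearMap.range_comp_of_range_eq_top f (LinearMap.range_eq_top.mpr hq₁),
      LinearMap.exact_iff.mp hfg]
  have hhκ : LinearMap.range (h ∘ₗ κ) ≤ LinearMap.range (f ∘ₗ q₁) := by
    rw [hrange]
    rintro _ ⟨x, rfl⟩
    simp [← LinearMap.comp_apply g h, hh, hκπ.apply_apply_eq_zero]
  obtain ⟨l, hl⟩ := Module.projective_lifting_property_of_range_le _ _ hhκ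
  -- `N₂` is the pushout of `l` and `κ`; pushouts preserve cokernels, so `N₂ ⧸ N₁ ≅ coker κ ≅ N₃`.
  set W := LinearMap.range (l.prod (-κ))
  have hWq₂ : W ≤ LinearMap.ker ((f ∘ₗ q₁).coprod h) := by
    rintro _ ⟨x, rfl⟩
    simp [← LinearMap.comp_apply (f ∘ₗ q₁) l, hl]
  have hWψ : W ≤ LinearMap.ker (π ∘ₗ LinearMap.snd R N₁ (Fin n → R)) := by
    rintro _ ⟨x, rfl⟩
    simp [hκπ.apply_apply_eq_zero]
  refine ⟨.of R ((N₁ × (Fin n → R)) ⧸ W), .quotient (Submodule.fg_range _),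
    ⟨W.liftQ _ hWq₂, Submodule.liftQ_surjective ?_ hWq₂⟩,
    W.mkQ ∘ₗ LinearMap.inl R N₁ (Fin n → R), W.liftQ _ hWψ, ?_,
    Submodule.liftQ_surjective ?_ hWψ⟩
  · intro y
    obtain ⟨x, hx⟩ := (hq₃.comp hπ) (g y)
    obtain ⟨a, ha⟩ : y - h x ∈ LinearMap.range (f ∘ₗ q₁) := by
      rw [hrange, LinearMap.mem_ker, map_sub, ← LinearMap.comp_apply g h, hh]
      exact sub_eq_zero.mpr hx.symm
    exact ⟨(a, x), by simp [ha]⟩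
  · intro y
    obtain ⟨⟨a, x⟩, rfl⟩ := W.mkQ_surjective y
    constructor
    · intro hx
      obtain ⟨z, rfl⟩ := (hκπ x).mp hx
      refine ⟨a + l z, (Submodule.Quotient.eq W).mpr ⟨z, ?_⟩⟩
      simp
    · rintro ⟨b, hb⟩
      simp [← hb]
  · exact hπ.comp LinearMap.snd_surjective

namespace SylvesterRank

variable {R : Type} [Ring R] (ρ : SylvesterRank R)

theorem d_le_of_surjective {N Q : ModuleCat.{0} R} [Module.FinitePresentation R N]
    [Module.FinitePresentation R Q] {θ : N →ₗ[R] Q} (hθ : Surjective θ) : ρ.d Q ≤ ρ.d N := by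
  obtain ⟨m, κ, hκ⟩ :=
    (Submodule.fg_iff_exists_fin_linearMap _ _).mp (Module.FinitePresentation.fg_ker θ hθ)
  exact (ρ.d_exact (.of R (Fin m → R)) N Q inferInstance inferInstance inferInstance κ θ
    (LinearMap.exact_iff.mpr hκ.symm) hθ).1

theorem d_quotient_add_d_quotient_le {N : ModuleCat.{0} R} [Module.FinitePresentation R N]
    {A B : Submodule R N} (hA : A.FG) (hB : B.FG) (hAB : A ⊔ B = ⊤) :
    ρ.d (.of R (N ⧸ A)) + ρ.d (.of R (N ⧸ B)) ≤ ρ.d N := by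
  have := Module.FinitePresentation.quotient hA
  have := Module.FinitePresentation.quotient hB
  rw [← ρ.d_add (.of R (N ⧸ A)) (.of R (N ⧸ B)) inferInstance inferInstance]
  refine ρ.d_le_of_surjective (θ := A.mkQ.prod B.mkQ) ?_
  rw [← LinearMap.range_eq_top, LinearMap.range_prod_eq (by simpa using hAB)]
  simp

theorem toFG_le {M N : ModuleCat.{0} R} (hN : Module.FinitePresentation R N) {q : N →ₗ[R] M}
    (hq : Surjective q) : ρ.toFG M ≤ ρ.d N :=
  csInf_le ⟨0, fun _ ⟨N, hN, _, hx⟩ => hx ▸ ρ.nonneg N hN⟩ ⟨N, hN, ⟨q, hq⟩, rfl⟩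

theorem le_toFG {M : ModuleCat.{0} R} [Module.Finite R M] {c : ℝ}
    (h : ∀ N : ModuleCat.{0} R, Module.FinitePresentation R N →
      ∀ q : N →ₗ[R] M, Surjective q → c ≤ ρ.d N) : c ≤ ρ.toFG M := by
  obtain ⟨n, q, hq⟩ := Module.Finite.exists_fin' R M
  refine le_csInf ⟨_, .of R (Fin n → R), inferInstance, ⟨q, hq⟩, rfl⟩ ?_
  rintro _ ⟨N, hN, ⟨q, hq⟩, rfl⟩
  exact h N hN q hq

theorem le_toFG_add_toFG {M₁ M₂ : ModuleCat.{0} R} [Module.Finite R M₁] [Module.Finite R M₂]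
    {c : ℝ} (h : ∀ N₁ N₂ : ModuleCat.{0} R, Module.FinitePresentation R N₁ →
      Module.FinitePresentation R N₂ → ∀ (q₁ : N₁ →ₗ[R] M₁) (q₂ : N₂ →ₗ[R] M₂),
      Surjective q₁ → Surjective q₂ → c ≤ ρ.d N₁ + ρ.d N₂) :
    c ≤ ρ.toFG M₁ + ρ.toFG M₂ := by
  suffices c - ρ.toFG M₂ ≤ ρ.toFG M₁ by linarith
  refine ρ.le_toFG fun N₁ hN₁ q₁ hq₁ => ?_
  suffices c - ρ.d N₁ ≤ ρ.toFG M₂ by linarith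
  exact ρ.le_toFG fun N₂ hN₂ q₂ hq₂ => by linarith [h N₁ N₂ hN₁ hN₂ q₁ q₂ hq₁ hq₂]

theorem toFG_prod_le (M₁ M₂ : ModuleCat.{0} R) [Module.Finite R M₁] [Module.Finite R M₂] :
    ρ.toFG (.of R (M₁ × M₂)) ≤ ρ.toFG M₁ + ρ.toFG M₂ :=
  ρ.le_toFG_add_toFG fun N₁ N₂ hN₁ hN₂ q₁ q₂ hq₁ hq₂ => by
    rw [← ρ.d_add N₁ N₂ hN₁ hN₂]
    exact ρ.toFG_le (.prod N₁ N₂) (q := q₁.prodMap q₂) (Prod.map_surjective.mpr ⟨hq₁, hq₂⟩)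

theorem toFG_add_toFG_le_d {M₁ M₂ N : ModuleCat.{0} R} [Module.FinitePresentation R N]
    {φ : N →ₗ[R] M₁ × M₂} (hφ : Surjective φ) : ρ.toFG M₁ + ρ.toFG M₂ ≤ ρ.d N := by
  obtain ⟨A, B, hA, hB, hAfg, hBfg, hAB⟩ :=
    Submodule.exists_fg_le_le_sup_eq_top (LinearMap.ker_fst_comp_sup_ker_snd_comp hφ)
  have h₁ := ρ.toFG_le (N := .of R (N ⧸ A)) (.quotient hAfg)
    (Submodule.liftQ_surjective ((LinearMap.fst_surjective (R := R) (M₂ := M₂)).comp hφ) hA)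
  have h₂ := ρ.toFG_le (N := .of R (N ⧸ B)) (.quotient hBfg)
    (Submodule.liftQ_surjective ((LinearMap.snd_surjective (R := R) (M := M₁)).comp hφ) hB)
  linarith [ρ.d_quotient_add_d_quotient_le hAfg hBfg hAB]

theorem toFG_add_toFG_le_toFG_prod (M₁ M₂ : ModuleCat.{0} R) [Module.Finite R M₁]
    [Module.Finite R M₂] : ρ.toFG M₁ + ρ.toFG M₂ ≤ ρ.toFG (.of R (M₁ × M₂)) :=
  ρ.le_toFG fun _ _ _ hφ => ρ.toFG_add_toFG_le_d hφ

theorem toFG_le_toFG_of_surjective {M M' : ModuleCat.{0} R} [Module.Finite R M]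
    {g : M →ₗ[R] M'} (hg : Surjective g) : ρ.toFG M' ≤ ρ.toFG M :=
  ρ.le_toFG fun _ hN q hq => ρ.toFG_le hN (q := g ∘ₗ q) (hg.comp hq)

theorem toFG_le_toFG_add_toFG_of_exact {M₁ M₂ M₃ : ModuleCat.{0} R} [Module.Finite R M₁]
    [Module.Finite R M₃] {f : M₁ →ₗ[R] M₂} {g : M₂ →ₗ[R] M₃} (hfg : Exact f g)
    (hg : Surjective g) : ρ.toFG M₂ ≤ ρ.toFG M₁ + ρ.toFG M₃ :=
  ρ.le_toFG_add_toFG fun N₁ N₃ hN₁ hN₃ _ _ hq₁ hq₃ => by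
    obtain ⟨N₂, hN₂, ⟨_, hq₂⟩, ι, ψ, hιψ, hψ⟩ :=
      exists_finitePresentation_cover_exact hfg hg hq₁ hq₃
    exact (ρ.toFG_le hN₂ hq₂).trans (ρ.d_exact N₁ N₂ N₃ hN₁ hN₂ hN₃ ι ψ hιψ hψ).2

end SylvesterRank

/-- The extension of a Sylvester module rank function to finitely
generated modules still satisfies (SMod2) and (SMod3):
`dim (M₁ ⊕ M₂) = dim M₁ + dim M₂` for finitely generated `M₁, M₂`, and
`dim M₃ ≤ dim M₂` and `dim M₂ ≤ dim M₁ + dim M₃` for every exact sequence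
`M₁ → M₂ → M₃ → 0` of finitely generated modules. -/
theorem stmt9 (R : Type) [Ring R] (ρ : SylvesterRank R) :
    (∀ M₁ M₂ : ModuleCat.{0} R, Module.Finite R M₁ → Module.Finite R M₂ →
      ρ.toFG (ModuleCat.of R (M₁ × M₂)) = ρ.toFG M₁ + ρ.toFG M₂) ∧
    (∀ (M₁ M₂ M₃ : ModuleCat.{0} R), Module.Finite R M₁ → Module.Finite R M₂ →
      Module.Finite R M₃ →
      ∀ (f : M₁ →ₗ[R] M₂) (g : M₂ →ₗ[R] M₃), Function.Exact f g →
        Function.Surjective g →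
        ρ.toFG M₃ ≤ ρ.toFG M₂ ∧ ρ.toFG M₂ ≤ ρ.toFG M₁ + ρ.toFG M₃) := by
  refine ⟨fun M₁ M₂ _ _ => (ρ.toFG_prod_le M₁ M₂).antisymm (ρ.toFG_add_toFG_le_toFG_prod M₁ M₂),
    fun _ _ _ _ _ _ _ _ hfg hg => ?_⟩
  exact ⟨ρ.toFG_le_toFG_of_surjective hg, ρ.toFG_le_toFG_add_toFG_of_exact hfg hg⟩
end

section
/- Let dim and dim_i (i ∈ ℕ) be Sylvester module rank functions on a ring R such that dim M' = lim_{i→∞} dim_i M' for every finitely presented R-module M', and dim M' ≤ dim_i M' for all i and all finitely presented M'. Then for every finitely generated R-module M (with the rank functions extended to finitely generated modules by infimum over finitely presented covers), dim M = lim_{i→∞} dim_i M. -/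
/-- Let `dim` and `dim_i` (`i ∈ ℕ`) be Sylvester module rank
functions on `R` such that `dim M' = lim_i dim_i M'` for every finitely presented
module `M'` and `dim M' ≤ dim_i M'` for all `i` and all finitely presented `M'`.
Then for every finitely generated module `M`, `dim M = lim_i dim_i M` (ranks being
extended to finitely generated modules by infimum over finitely presented covers). -/
theorem stmt10 (R : Type) [Ring R] (ρ : SylvesterRank R) (ρi : ℕ → SylvesterRank R)
    (hlim : ∀ M : ModuleCat.{0} R, Module.FinitePresentation R M →
      Filter.Tendsto (fun i => (ρi i).d M) Filter.atTop (nhds (ρ.d M)))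
    (hle : ∀ (i : ℕ) (M : ModuleCat.{0} R), Module.FinitePresentation R M →
      ρ.d M ≤ (ρi i).d M)
    (M : ModuleCat.{0} R) (hM : Module.Finite R M) :
    Filter.Tendsto (fun i => (ρi i).toFG M) Filter.atTop (nhds (ρ.toFG M)) := by
  classical
  set S : SylvesterRank R → Set ℝ := fun σ =>
    {x : ℝ | ∃ M' : ModuleCat.{0} R, Module.FinitePresentation R M' ∧
      (∃ f : M' →ₗ[R] M, Function.Surjective f) ∧ x = σ.d M'} with hS
  obtain ⟨n, f, hf⟩ := Module.Finite.exists_fin' R M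
  have hfree : Module.FinitePresentation R (ModuleCat.of R (Fin n → R)) := by
    exact inferInstanceAs (Module.FinitePresentation R (Fin n → R))
  have hne : ∀ σ : SylvesterRank R, (S σ).Nonempty := fun σ =>
    ⟨σ.d (ModuleCat.of R (Fin n → R)), ModuleCat.of R (Fin n → R), hfree, ⟨f, hf⟩, rfl⟩
  have hbdd : ∀ σ : SylvesterRank R, BddBelow (S σ) := by
    intro σ
    refine ⟨0, ?_⟩
    rintro x ⟨M', hM', _, rfl⟩
    exact σ.nonneg M' hM'
  have hmem : ∀ (σ : SylvesterRank R) (M' : ModuleCat.{0} R),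
      Module.FinitePresentation R M' → (∃ g : M' →ₗ[R] M, Function.Surjective g) →
      σ.toFG M ≤ σ.d M' := by
    intro σ M' h1 h2
    exact csInf_le (hbdd σ) ⟨M', h1, h2, rfl⟩
  have hlb : ∀ i, ρ.toFG M ≤ (ρi i).toFG M := by
    intro i
    refine le_csInf (hne (ρi i)) ?_
    rintro x ⟨M', h1, h2, rfl⟩
    exact le_trans (hmem ρ M' h1 h2) (hle i M' h1)
  rw [Metric.tendsto_atTop]
  intro ε hε
  have : ρ.toFG M < ρ.toFG M + ε / 2 := by linarith
  obtain ⟨x, ⟨M', h1, h2, rfl⟩, hx⟩ := exists_lt_of_csInf_lt (hne ρ) this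
  have htd := hlim M' h1
  rw [Metric.tendsto_atTop] at htd
  obtain ⟨N, hN⟩ := htd (ε / 2) (by linarith)
  refine ⟨N, fun i hi => ?_⟩
  have h3 : (ρi i).toFG M ≤ (ρi i).d M' := hmem (ρi i) M' h1 h2
  have h4 := hN i hi
  rw [Real.dist_eq, abs_lt] at h4 ⊢
  constructor <;> [linarith [hlb i]; linarith]
end

section
/- Let dim and dim_i be Sylvester module rank functions on a ring R extended to finitely generated modules. If dim M = lim_i dim_i M for all finitely presented M, then for every finitely generated R-module M one has dim M ≥ limsup_{i→∞} dim_i M. -/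
/-- Let `dim` and `dim_i` be Sylvester module rank functions on `R`
with `dim M' = lim_i dim_i M'` for all finitely presented `M'`.  Then for every
finitely generated module `M` one has `dim M ≥ limsup_i dim_i M` (ranks being
extended to finitely generated modules by infimum over finitely presented covers). -/
theorem stmt11 (R : Type) [Ring R] (ρ : SylvesterRank R) (ρi : ℕ → SylvesterRank R)
    (hlim : ∀ M : ModuleCat.{0} R, Module.FinitePresentation R M →
      Filter.Tendsto (fun i => (ρi i).d M) Filter.atTop (nhds (ρ.d M)))
    (M : ModuleCat.{0} R) (hM : Module.Finite R M) :
    Filter.limsup (fun i => (ρi i).toFG M) Filter.atTop ≤ ρ.toFG M := by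
  obtain ⟨n, f, hf⟩ := Module.Finite.exists_fin' R M
  have hfp : Module.FinitePresentation R (ModuleCat.of R (Fin n → R)) :=
    Module.finitePresentation_of_projective R (Fin n → R)
  have hmem : ∀ ρ' : SylvesterRank R, ρ'.d (ModuleCat.of R (Fin n → R)) ∈
      {x : ℝ | ∃ M' : ModuleCat.{0} R, Module.FinitePresentation R M' ∧
        (∃ f : M' →ₗ[R] M, Function.Surjective f) ∧ x = ρ'.d M'} :=
    fun ρ' => ⟨ModuleCat.of R (Fin n → R), hfp, ⟨f, hf⟩, rfl⟩
  have hbdd : ∀ ρ' : SylvesterRank R, 0 ∈ lowerBounds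
      {x : ℝ | ∃ M' : ModuleCat.{0} R, Module.FinitePresentation R M' ∧
        (∃ f : M' →ₗ[R] M, Function.Surjective f) ∧ x = ρ'.d M'} := by
    rintro ρ' x ⟨M', hM', -, rfl⟩
    exact ρ'.nonneg M' hM'
  have h0 : ∀ i, 0 ≤ (ρi i).toFG M := fun i =>
    le_csInf ⟨_, hmem (ρi i)⟩ fun x hx => hbdd (ρi i) hx
  apply le_csInf ⟨_, hmem ρ⟩
  rintro x ⟨M', hM', ⟨g, hg⟩, rfl⟩
  have h1 : ∀ i, (ρi i).toFG M ≤ (ρi i).d M' := fun i =>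
    csInf_le ⟨0, hbdd (ρi i)⟩ ⟨M', hM', ⟨g, hg⟩, rfl⟩
  calc Filter.limsup (fun i => (ρi i).toFG M) Filter.atTop
      ≤ Filter.limsup (fun i => (ρi i).d M') Filter.atTop := by
        exact Filter.limsup_le_limsup (Filter.Eventually.of_forall h1)
          (hu := Filter.IsBoundedUnder.isCoboundedUnder_le
            ⟨0, Filter.eventually_map.2 (Filter.Eventually.of_forall h0)⟩)
          (hv := (hlim M' hM').isBoundedUnder_le)
    _ = ρ.d M' := (hlim M' hM').limsup_eq
end

section
/- Let Γ be a group, K a field, and N a normal subgroup of finite index in Γ. Define, for each finitely presented K[Γ]-module M, dim_{K[Γ/N]}(M) = dim_K(K ⊗_{K[N]} M) / |Γ : N|. Then dim_{K[Γ/N]} is a Sylvester module rank function on K[Γ]. -/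
/-- For a module `M` over a group algebra `K[Γ]` and a subgroup `N ≤ Γ`, the
submodule generated by the elements `n • m - m` (`n ∈ N`, `m ∈ M`); the quotient by
it is the module of `N`-coinvariants `K ⊗_{K[N]} M`. -/
noncomputable def coinvKer (K : Type) [Field K] (Γ : Type) [Group Γ] (N : Subgroup Γ)
    (M : ModuleCat.{0} (MonoidAlgebra K Γ)) : Submodule (MonoidAlgebra K Γ) M :=
  Submodule.span (MonoidAlgebra K Γ)
    {x : M | ∃ n ∈ N, ∃ m : M, x = (MonoidAlgebra.of K Γ n) • m - m}

/-!
On the coinvariants `M ⧸ coinvKer K Γ N M` an element `g` of `Γ` acts only through its coset `gN`,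
so if `M` is generated by finitely many `m`, its coinvariants are spanned over `K` by the finitely
many `c.out • m`. Taking coinvariants is right exact and commutes with binary products, so
rank–nullity turns an exact sequence `M₁ → M₂ → M₃ → 0` into the Sylvester inequalities for
`M ↦ dim_K (M ⧸ coinvKer K Γ N M)`. For normal `N` the coinvariants of `K[Γ]` are `K[Γ/N]`, of
dimension `|Γ : N|`, which is why one divides by the index.
-/

namespace RestrictScalars

variable (R : Type*) {S M M' : Type*} [CommSemiring R] [Semiring S] [Algebra R S]
  [AddCommMonoid M] [Module S M] [AddCommMonoid M'] [Module S M']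

def map (f : M →ₗ[S] M') : RestrictScalars R S M →ₗ[R] RestrictScalars R S M' where
  toFun := f
  map_add' := f.map_add
  map_smul' c := f.map_smul (algebraMap R S c)

def congr (e : M ≃ₗ[S] M') : RestrictScalars R S M ≃ₗ[R] RestrictScalars R S M' :=
  { map R e.toLinearMap, e.toEquiv with }

def linearEquiv [Module R M] [IsScalarTower R S M] : RestrictScalars R S M ≃ₗ[R] M :=
  { addEquiv R S M with
    map_smul' c x := (addEquiv_map_smul R S M c x).trans (algebraMap_smul S c _) }

end RestrictScalars

theorem LinearMap.finrank_range_add_finrank_eq_of_exact {K V₁ V₂ V₃ : Type*} [Field K]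
    [AddCommMonoid V₁] [Module K V₁] [AddCommMonoid V₂] [Module K V₂] [AddCommMonoid V₃]
    [Module K V₃] [Module.Finite K V₂] {f : V₁ →ₗ[K] V₂} {g : V₂ →ₗ[K] V₃}
    (hfg : Function.Exact f g) (hg : Function.Surjective g) :
    Module.finrank K (range f) + Module.finrank K V₃ = Module.finrank K V₂ := by
  -- Stated for `AddCommMonoid`s: the `AddCommGroup` instance of `RestrictScalars` does not
  -- reducibly extend its `AddCommMonoid` instance, so instance search would fail there.
  let := Module.addCommMonoidToAddCommGroup K (M := V₂)
  let := Module.addCommMonoidToAddCommGroup K (M := V₃)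
  rw [← g.finrank_range_add_finrank_ker, range_eq_top.2 hg, finrank_top, exact_iff.1 hfg,
    add_comm]

section Coinvariants

open MonoidAlgebra

variable {K : Type} [Field K] {Γ : Type} [Group Γ] (N : Subgroup Γ)

theorem of_smul_sub_mem_coinvKer {M : ModuleCat.{0} K[Γ]} {n : Γ} (hn : n ∈ N) (m : M) :
    of K Γ n • m - m ∈ coinvKer K Γ N M :=
  Submodule.subset_span ⟨n, hn, m, rfl⟩

theorem coinvKer_le_comap {M M' : ModuleCat.{0} K[Γ]} (f : M →ₗ[K[Γ]] M') :
    coinvKer K Γ N M ≤ (coinvKer K Γ N M').comap f := by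
  refine Submodule.span_le.2 ?_
  rintro _ ⟨n, hn, m, rfl⟩
  simpa using of_smul_sub_mem_coinvKer N hn (f m)

theorem coinvKer_eq_map_of_surjective {M M' : ModuleCat.{0} K[Γ]} {f : M →ₗ[K[Γ]] M'}
    (hf : Function.Surjective f) : coinvKer K Γ N M' = (coinvKer K Γ N M).map f := by
  refine le_antisymm (Submodule.span_le.2 ?_)
    (Submodule.map_le_iff_le_comap.2 (coinvKer_le_comap N f))
  rintro _ ⟨n, hn, m', rfl⟩
  obtain ⟨m, rfl⟩ := hf m'
  exact ⟨_, of_smul_sub_mem_coinvKer N hn m, by simp⟩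

noncomputable def coinvMap {M M' : ModuleCat.{0} K[Γ]} (f : M →ₗ[K[Γ]] M') :
    (M ⧸ coinvKer K Γ N M) →ₗ[K[Γ]] M' ⧸ coinvKer K Γ N M' :=
  Submodule.mapQ _ _ f (coinvKer_le_comap N f)

@[simp]
theorem coinvMap_mk {M M' : ModuleCat.{0} K[Γ]} (f : M →ₗ[K[Γ]] M') (m : M) :
    coinvMap N f (Submodule.Quotient.mk m) = Submodule.Quotient.mk (f m) :=
  rfl

theorem coinvMap_surjective {M M' : ModuleCat.{0} K[Γ]} {f : M →ₗ[K[Γ]] M'}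
    (hf : Function.Surjective f) : Function.Surjective (coinvMap N f) := by
  intro y
  obtain ⟨m', rfl⟩ := Submodule.Quotient.mk_surjective _ y
  obtain ⟨m, rfl⟩ := hf m'
  exact ⟨Submodule.Quotient.mk m, rfl⟩

theorem coinvMap_leftInverse {M M' : ModuleCat.{0} K[Γ]} {f : M' →ₗ[K[Γ]] M}
    {g : M →ₗ[K[Γ]] M'} (h : Function.LeftInverse f g) :
    Function.LeftInverse (coinvMap N f) (coinvMap N g) := by
  intro y
  obtain ⟨m, rfl⟩ := Submodule.Quotient.mk_surjective _ y
  exact congrArg Submodule.Quotient.mk (h m)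

theorem coinvMap_exact {M₁ M₂ M₃ : ModuleCat.{0} K[Γ]} {f : M₁ →ₗ[K[Γ]] M₂}
    {g : M₂ →ₗ[K[Γ]] M₃} (hfg : Function.Exact f g) (hg : Function.Surjective g) :
    Function.Exact (coinvMap N f) (coinvMap N g) := by
  intro y
  obtain ⟨m, rfl⟩ := Submodule.Quotient.mk_surjective _ y
  constructor
  · intro hm
    obtain ⟨z, hz, hgz⟩ : g m ∈ (coinvKer K Γ N M₂).map g := by
      rw [← coinvKer_eq_map_of_surjective N hg]
      exact (Submodule.Quotient.mk_eq_zero _).1 hm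
    obtain ⟨w, hw⟩ := (hfg (m - z)).1 (by rw [map_sub, hgz, sub_self])
    refine ⟨Submodule.Quotient.mk w, (Submodule.Quotient.eq _).2 ?_⟩
    rw [hw, sub_sub_cancel_left]
    exact neg_mem hz
  · rintro ⟨w, hw⟩
    obtain ⟨w, rfl⟩ := Submodule.Quotient.mk_surjective _ w
    rw [← hw, coinvMap_mk, coinvMap_mk, hfg.apply_apply_eq_zero, Submodule.Quotient.mk_zero]

noncomputable def coinvCongr {M M' : ModuleCat.{0} K[Γ]} (e : M ≃ₗ[K[Γ]] M') :
    (M ⧸ coinvKer K Γ N M) ≃ₗ[K[Γ]] M' ⧸ coinvKer K Γ N M' :=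
  Submodule.Quotient.equiv _ _ e (coinvKer_eq_map_of_surjective N e.surjective).symm

theorem of_smul_eq_self_of_mem {M : ModuleCat.{0} K[Γ]} {n : Γ} (hn : n ∈ N)
    (x : M ⧸ coinvKer K Γ N M) : of K Γ n • x = x := by
  obtain ⟨m, rfl⟩ := Submodule.Quotient.mk_surjective _ x
  exact (Submodule.Quotient.eq _).2 (of_smul_sub_mem_coinvKer N hn m)

theorem of_smul_eq_of_smul_of_coe_eq {M : ModuleCat.{0} K[Γ]} {g g' : Γ}
    (h : (g : Γ ⧸ N) = g') (x : M ⧸ coinvKer K Γ N M) : of K Γ g • x = of K Γ g' • x := by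
  rw [show g' = g * (g⁻¹ * g') by group, map_mul, mul_smul,
    of_smul_eq_self_of_mem N (QuotientGroup.eq.1 h)]

noncomputable def coinvFinrank (M : ModuleCat.{0} K[Γ]) : ℕ :=
  Module.finrank K (RestrictScalars K K[Γ] (M ⧸ coinvKer K Γ N M))

section FiniteDimensional

open scoped Pointwise

attribute [local instance] RestrictScalars.moduleOrig

instance finite_restrictScalars_coinv [N.FiniteIndex] (M : ModuleCat.{0} K[Γ])
    [Module.Finite K[Γ] M] : Module.Finite K (RestrictScalars K K[Γ] (M ⧸ coinvKer K Γ N M)) := by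
  have : Module.Finite K[Γ] (RestrictScalars K K[Γ] (M ⧸ coinvKer K Γ N M)) :=
    inferInstanceAs (Module.Finite K[Γ] (M ⧸ coinvKer K Γ N M))
  obtain ⟨T, hT⟩ := Module.Finite.fg_top (R := K[Γ])
    (M := RestrictScalars K K[Γ] (M ⧸ coinvKer K Γ N M))
  have hspan : Submodule.span K (Set.range (of K Γ)) = ⊤ := (basis Γ K).span_eq
  refine ⟨Submodule.fg_def.2 ⟨Set.range (fun c : Γ ⧸ N ↦ of K Γ c.out) • (T : Set _),
    (Set.finite_range _).smul T.finite_toSet, eq_top_iff.2 ?_⟩⟩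
  rw [← Submodule.restrictScalars_top K K[Γ], ← hT, ← Submodule.span_smul_of_span_eq_top hspan,
    Submodule.span_le]
  rintro _ ⟨_, ⟨g, rfl⟩, t, ht, rfl⟩
  exact Submodule.subset_span ⟨_, ⟨(g : Γ ⧸ N), rfl⟩, t, ht,
    of_smul_eq_of_smul_of_coe_eq N (QuotientGroup.out_eq' _) t⟩

end FiniteDimensional

theorem restrictScalars_coinvKer_self_eq_ker [N.Normal] :
    (coinvKer K Γ N (ModuleCat.of K[Γ] K[Γ])).restrictScalars K =
      LinearMap.ker (mapDomainAlgHom K K (QuotientGroup.mk' N)).toLinearMap := by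
  set π := mapDomainAlgHom K K (QuotientGroup.mk' N)
  apply le_antisymm
  · have hle : coinvKer K Γ N (ModuleCat.of K[Γ] K[Γ]) ≤ RingHom.ker π := by
      refine Submodule.span_le.2 ?_
      rintro _ ⟨n, hn, m, rfl⟩
      have hπn : π (of K Γ n) = 1 := by simp [π, (QuotientGroup.eq_one_iff n).2 hn, one_def]
      change π (of K Γ n * m - m) = 0
      rw [map_sub, map_mul, hπn, one_mul, sub_self]
    exact hle
  · -- `θ` lifts `K[Γ/N]` back to `K[Γ]` along coset representatives; `y - θ (π y)` is then a
    -- combination of the `g - (gN).out`, which die in the coinvariants.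
    let θ : K[Γ ⧸ N] →ₗ[K] K[Γ] := (basis (Γ ⧸ N) K).constr K fun c ↦ of K Γ c.out
    have hθ_single (c : Γ ⧸ N) : θ (single c 1) = single c.out 1 :=
      (basis (Γ ⧸ N) K).constr_basis K _ c
    have hθ : ∀ y, y - θ (π y) ∈ coinvKer K Γ N (ModuleCat.of K[Γ] K[Γ]) := by
      suffices LinearMap.range (LinearMap.id - θ ∘ₗ π.toLinearMap) ≤
          (coinvKer K Γ N (ModuleCat.of K[Γ] K[Γ])).restrictScalars K from
        fun y ↦ this ⟨y, rfl⟩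
      rw [LinearMap.range_eq_map, ← (basis Γ K).span_eq, Submodule.map_span_le]
      rintro _ ⟨g, rfl⟩
      have := of_smul_eq_of_smul_of_coe_eq N (M := ModuleCat.of K[Γ] K[Γ])
        (QuotientGroup.out_eq' (g : Γ ⧸ N)).symm (Submodule.Quotient.mk 1)
      rw [← Submodule.Quotient.mk_smul, ← Submodule.Quotient.mk_smul, Submodule.Quotient.eq]
        at this
      simpa [π, hθ_single] using this
    intro x hx
    have hπx : π x = 0 := hx
    simpa [hπx] using hθ x

theorem coinvFinrank_self [N.Normal] [N.FiniteIndex] :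
    coinvFinrank N (ModuleCat.of K[Γ] K[Γ]) = N.index := by
  set π := mapDomainAlgHom K K (QuotientGroup.mk' N)
  have hπ : Function.Surjective π.toLinearMap := by
    refine LinearMap.range_eq_top.1 (eq_top_iff.2 ?_)
    rw [← (basis (Γ ⧸ N) K).span_eq, Submodule.span_le]
    rintro _ ⟨c, rfl⟩
    exact ⟨of K Γ c.out, by simp [π]⟩
  have := Fintype.ofFinite (Γ ⧸ N)
  calc _ = Module.finrank K (K[Γ] ⧸ coinvKer K Γ N (ModuleCat.of K[Γ] K[Γ])) :=
        (RestrictScalars.linearEquiv K).finrank_eq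
    _ = Module.finrank K (K[Γ] ⧸ (coinvKer K Γ N (ModuleCat.of K[Γ] K[Γ])).restrictScalars K) :=
        (Submodule.Quotient.restrictScalarsEquiv K _).symm.finrank_eq
    _ = Module.finrank K K[Γ ⧸ N] := by
        rw [restrictScalars_coinvKer_self_eq_ker]
        exact (π.toLinearMap.quotKerEquivOfSurjective hπ).finrank_eq
    _ = N.index := by
        rw [Module.finrank_eq_card_basis (basis _ K), Subgroup.index, Nat.card_eq_fintype_card]

theorem coinvFinrank_congr {M M' : ModuleCat.{0} K[Γ]} (e : M ≃ₗ[K[Γ]] M') :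
    coinvFinrank N M = coinvFinrank N M' :=
  (RestrictScalars.congr K (coinvCongr N e)).finrank_eq

theorem coinvFinrank_punit : coinvFinrank N (ModuleCat.of K[Γ] PUnit) = 0 :=
  have : Subsingleton (RestrictScalars K K[Γ] (_ ⧸ coinvKer K Γ N (ModuleCat.of K[Γ] PUnit))) :=
    (Submodule.Quotient.mk_surjective _).subsingleton
  Module.finrank_zero_of_subsingleton

variable [N.FiniteIndex] {M₁ M₂ M₃ : ModuleCat.{0} K[Γ]} {f : M₁ →ₗ[K[Γ]] M₂}
  {g : M₂ →ₗ[K[Γ]] M₃}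

theorem finrank_range_add_coinvFinrank_of_exact [Module.Finite K[Γ] M₂]
    (hfg : Function.Exact f g) (hg : Function.Surjective g) :
    Module.finrank K (LinearMap.range (RestrictScalars.map K (coinvMap N f))) + coinvFinrank N M₃ =
      coinvFinrank N M₂ :=
  LinearMap.finrank_range_add_finrank_eq_of_exact (g := RestrictScalars.map K (coinvMap N g))
    (coinvMap_exact N hfg hg) (coinvMap_surjective N hg)

theorem coinvFinrank_le_of_surjective [Module.Finite K[Γ] M₂] (hg : Function.Surjective g) :
    coinvFinrank N M₃ ≤ coinvFinrank N M₂ :=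
  LinearMap.finrank_le_finrank_of_surjective (f := RestrictScalars.map K (coinvMap N g))
    (coinvMap_surjective N hg)

theorem coinvFinrank_le_add_of_exact [Module.Finite K[Γ] M₁] [Module.Finite K[Γ] M₂]
    (hfg : Function.Exact f g) (hg : Function.Surjective g) :
    coinvFinrank N M₂ ≤ coinvFinrank N M₁ + coinvFinrank N M₃ := by
  rw [← finrank_range_add_coinvFinrank_of_exact N hfg hg]
  exact Nat.add_le_add_right (LinearMap.finrank_range_le _) _

theorem coinvFinrank_prod (M M' : ModuleCat.{0} K[Γ]) [Module.Finite K[Γ] M]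
    [Module.Finite K[Γ] M'] :
    coinvFinrank N (ModuleCat.of K[Γ] (M × M')) = coinvFinrank N M + coinvFinrank N M' := by
  have hinl : Function.Injective
      (RestrictScalars.map K (coinvMap N (M' := .of K[Γ] (M × M')) (LinearMap.inl K[Γ] M M'))) :=
    (coinvMap_leftInverse N (M := M) (f := LinearMap.fst K[Γ] M M') fun _ ↦ rfl).injective
  rw [← finrank_range_add_coinvFinrank_of_exact N (M₃ := M') .inl_snd
    (fun x ↦ ⟨(0, x), rfl⟩), LinearMap.finrank_range_of_inj hinl]
  rfl

end Coinvariants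

/-- Let `Γ` be a group, `K` a field and `N` a normal subgroup of
finite index in `Γ`.  Then the assignment
`M ↦ dim_K (K ⊗_{K[N]} M) / |Γ : N|` (for finitely presented `K[Γ]`-modules `M`) is
a Sylvester module rank function on `K[Γ]`; here `K ⊗_{K[N]} M` is realised as the
module of `N`-coinvariants of `M`, whose `K`-dimension is computed after restricting
scalars along `K → K[Γ]`. -/
theorem stmt12 (K : Type) [Field K] (Γ : Type) [Group Γ]
    (N : Subgroup Γ) (hN : N.Normal) (hidx : N.index ≠ 0) :
    ∃ ρ : SylvesterRank (MonoidAlgebra K Γ),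
      ∀ M : ModuleCat.{0} (MonoidAlgebra K Γ), Module.FinitePresentation (MonoidAlgebra K Γ) M →
        ρ.d M = (Module.finrank K
            (RestrictScalars K (MonoidAlgebra K Γ) (M ⧸ coinvKer K Γ N M)) : ℝ)
          / (N.index : ℝ) := by
  have : N.FiniteIndex := ⟨hidx⟩
  have hidx' : (N.index : ℝ) ≠ 0 := Nat.cast_ne_zero.2 hidx
  refine ⟨⟨fun M ↦ (coinvFinrank N M : ℝ) / N.index, fun _ _ ↦ by positivity, ?_, ?_, ?_, ?_, ?_⟩,
    fun _ _ ↦ rfl⟩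
  · rintro M M' - - ⟨e⟩
    simp only [coinvFinrank_congr N e]
  · simp [coinvFinrank_punit]
  · simp [coinvFinrank_self, hidx']
  · intro M M' _ _
    simp only [coinvFinrank_prod, Nat.cast_add, add_div]
  · intro M₁ M₂ M₃ _ _ _ f g hfg hg
    exact ⟨by gcongr; exact coinvFinrank_le_of_surjective N hg,
      by rw [← add_div]; gcongr; exact_mod_cast coinvFinrank_le_add_of_exact N hfg hg⟩
end

section
/- Let Γ be a finitely generated, residually-p, just infinite group. Assuming (i) Zel'manov's theorem that a finitely generated residually-p torsion group of bounded exponent is finite, and (ii) the rank gradient drop estimate rg(G/⟨⟨g^{p^k}⟩⟩) ≥ rg(G) − p^{−k} for pro-p groups G, one has rg(Γ_p̂) = 0. -/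
/-- The minimal number of generators of a group. -/
noncomputable def genNum (H : Type*) [Group H] : ℕ :=
  sInf {n : ℕ | ∃ S : Finset H, S.card = n ∧ Subgroup.closure (S : Set H) = ⊤}

/-- `dim_{𝔽_p} H₁(N; 𝔽_p)`, realised as the minimal number of generators of the
elementary abelian `p`-group `N/[N,N]N^p`. -/
noncomputable def dimH1 (p : ℕ) {Γ : Type*} [Group Γ] (N : Subgroup Γ) : ℕ :=
  genNum (Abelianization ↥N ⧸ (powMonoidHom (α := Abelianization ↥N) p).range)

/-- The rank gradient of the pro-`p` completion of a group `Γ`: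
`rg(Γ_p̂) = inf { dim_{𝔽_p} H₁(N;𝔽_p) / |Γ:N| : N ⊴ Γ of p-power index }`,
the open normal subgroups of `Γ_p̂` corresponding to the normal subgroups of `Γ` of
`p`-power index. -/
noncomputable def rgProP (p : ℕ) (Γ : Type*) [Group Γ] : ℝ :=
  ⨅ N : {N : Subgroup Γ // N.Normal ∧ ∃ k : ℕ, N.index = p ^ k},
    (dimH1 p N.1 : ℝ) / (N.1.index : ℝ)

/-- A group is residually-`p` if every nontrivial element survives in a quotient of
`p`-power order. -/
def IsResiduallyP (p : ℕ) (G : Type*) [Group G] : Prop :=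
  ∀ g : G, g ≠ 1 → ∃ N : Subgroup G, N.Normal ∧ (∃ k : ℕ, N.index = p ^ k) ∧ g ∉ N

lemma genNum_eq_zero_of_subsingleton (H : Type*) [Group H] [Subsingleton H] :
    genNum H = 0 := by
  apply Nat.sInf_eq_zero.mpr
  left
  refine ⟨∅, Finset.card_empty, ?_⟩
  rw [Finset.coe_empty, Subgroup.closure_empty]
  exact Subsingleton.elim _ _

lemma rgProP_nonneg (p : ℕ) (G : Type*) [Group G] : 0 ≤ rgProP p G :=
  Real.iInf_nonneg fun N => div_nonneg (Nat.cast_nonneg _) (Nat.cast_nonneg _)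


lemma key (p : ℕ) (hp : p.Prime) (Q : Type*) [Group Q] [Finite Q] :
    ∃ K : Subgroup Q, K.Normal ∧ (∃ k : ℕ, K.index = p ^ k) ∧
      Subsingleton (Abelianization ↥K ⧸ (powMonoidHom (α := Abelianization ↥K) p).range) := by
  haveI := Fact.mk hp
  set S : Set ℕ := {n | ∃ K : Subgroup Q, K.Normal ∧ (∃ k : ℕ, K.index = p ^ k) ∧
      Nat.card ↥K = n} with hSdef
  have hS : S.Nonempty := ⟨Nat.card ↥(⊤ : Subgroup Q), ⊤, inferInstance,
    ⟨0, by simp [Subgroup.index_top]⟩, rfl⟩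
  obtain ⟨K, hKnorm, hKidx, hKcard⟩ := Nat.sInf_mem hS
  set gens : Set Q :=
    {x | ∃ a ∈ K, ∃ b ∈ K, x = a * b * a⁻¹ * b⁻¹} ∪ {x | ∃ a ∈ K, x = a ^ p} with hgens
  set M : Subgroup Q := Subgroup.closure gens with hM
  have hgensK : gens ⊆ (K : Set Q) := by
    rintro x (⟨a, ha, b, hb, rfl⟩ | ⟨a, ha, rfl⟩)
    · exact mul_mem (mul_mem (mul_mem ha hb) (inv_mem ha)) (inv_mem hb)
    · exact pow_mem ha p
  have hMK : M ≤ K := (Subgroup.closure_le K).mpr hgensK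
  have hMnorm : M.Normal := by
    constructor
    intro n hn q
    induction hn using Subgroup.closure_induction with
    | mem x hx =>
      apply Subgroup.subset_closure
      rcases hx with ⟨a, ha, b, hb, rfl⟩ | ⟨a, ha, rfl⟩
      · refine Or.inl ⟨q * a * q⁻¹, hKnorm.conj_mem a ha q,
          q * b * q⁻¹, hKnorm.conj_mem b hb q, ?_⟩
        group
      · exact Or.inr ⟨q * a * q⁻¹, hKnorm.conj_mem a ha q, (conj_pow).symm⟩
    | one => simpa using one_mem M
    | mul x y hx hy px py =>
      have h : q * (x * y) * q⁻¹ = (q * x * q⁻¹) * (q * y * q⁻¹) := by group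
      rw [h]; exact mul_mem px py
    | inv x hx px =>
      have h : q * x⁻¹ * q⁻¹ = (q * x * q⁻¹)⁻¹ := by group
      rw [h]; exact inv_mem px
  have hMidx : ∃ k : ℕ, M.index = p ^ k := by
    have hpq : IsPGroup p (↥K ⧸ M.subgroupOf K) := by
      intro g
      obtain ⟨y, rfl⟩ := QuotientGroup.mk_surjective g
      refine ⟨1, ?_⟩
      rw [pow_one, ← QuotientGroup.mk_pow, QuotientGroup.eq_one_iff]
      rw [Subgroup.mem_subgroupOf]
      exact Subgroup.subset_closure (Or.inr ⟨(y : Q), y.2, by push_cast; rfl⟩)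
    obtain ⟨a, hcard⟩ := IsPGroup.iff_card.mp hpq
    obtain ⟨b, hb⟩ := hKidx
    refine ⟨a + b, ?_⟩
    rw [← Subgroup.relIndex_mul_index hMK, hb]
    have h2 : M.relIndex K = p ^ a := hcard
    rw [h2, pow_add]
  have hMcard : Nat.card ↥M ∈ S := ⟨M, hMnorm, hMidx, rfl⟩
  have hle : Nat.card ↥K ≤ Nat.card ↥M := hKcard ▸ Nat.sInf_le hMcard
  have hKM : M = K := Subgroup.eq_of_le_of_card_ge hMK hle
  refine ⟨K, hKnorm, hKidx, ?_⟩
  set A := Abelianization ↥K ⧸ (powMonoidHom (α := Abelianization ↥K) p).range with hA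
  set ψ : ↥K →* A := (QuotientGroup.mk' _).comp Abelianization.of with hψ
  have hmain : ∀ x (hx : x ∈ Subgroup.closure gens), ∀ h : x ∈ K, ψ ⟨x, h⟩ = 1 := by
    intro x hx
    induction hx using Subgroup.closure_induction with
    | mem x hx =>
      intro h
      rcases hx with ⟨a, ha, b, hb, hxe⟩ | ⟨a, ha, hxe⟩
      · have he : (⟨x, h⟩ : ↥K) = ⟨a, ha⟩ * ⟨b, hb⟩ * (⟨a, ha⟩)⁻¹ * (⟨b, hb⟩)⁻¹ := by
          apply Subtype.ext; simp [hxe]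
        rw [he, map_mul, map_mul, map_mul, map_inv, map_inv,
          mul_comm (ψ ⟨a, ha⟩) (ψ ⟨b, hb⟩)]
        group
      · have he : (⟨x, h⟩ : ↥K) = (⟨a, ha⟩ : ↥K) ^ p := by
          apply Subtype.ext; simp [hxe]
        rw [he, map_pow, hψ, MonoidHom.comp_apply, ← map_pow, QuotientGroup.mk'_apply, QuotientGroup.eq_one_iff]
        exact ⟨Abelianization.of (⟨a, ha⟩ : ↥K), rfl⟩
    | one =>
      intro h
      have he : (⟨(1 : Q), h⟩ : ↥K) = 1 := rfl
      rw [he, map_one]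
    | mul x y hx hy px py =>
      intro h
      have he : (⟨x * y, h⟩ : ↥K) = ⟨x, hMK hx⟩ * ⟨y, hMK hy⟩ := rfl
      rw [he, map_mul, px (hMK hx), py (hMK hy), mul_one]
    | inv x hx px =>
      intro h
      have he : (⟨x⁻¹, h⟩ : ↥K) = (⟨x, hMK hx⟩ : ↥K)⁻¹ := rfl
      rw [he, map_inv, px (hMK hx), inv_one]
  have hψone : ∀ y : ↥K, ψ y = 1 := fun y =>
    hmain (y : Q) (by rw [← hM, hKM]; exact y.2) y.2
  constructor
  intro a b
  have htriv : ∀ a : A, a = 1 := by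
    intro a
    refine QuotientGroup.induction_on a ?_
    intro z
    refine QuotientGroup.induction_on z ?_
    intro y
    exact hψone y
  rw [htriv a, htriv b]

/-- Let `Γ` be a finitely generated, residually-`p`, just infinite
group.  Assuming (i) Zel'manov's theorem (a finitely generated residually-`p` torsion
group of bounded exponent is finite, instantiated at `Γ`), and (ii) the rank gradient
drop estimate `rg(G/⟨⟨g^{p^k}⟩⟩) ≥ rg(G) − p^{−k}` (formulated for the pro-`p`
completions, i.e. in terms of `rgProP` of quotients of `Γ`), every finitely generated
residually-`p` just infinite group `Γ` satisfies `rg(Γ_p̂) = 0`. -/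
theorem stmt19 (p : ℕ) (hp : p.Prime) (Γ : Type*) [Group Γ]
    (hfg : Group.FG Γ) (hrp : IsResiduallyP p Γ) (hji : IsJustInfinite Γ)
    (hZelmanov : ∀ k : ℕ, (∀ x : Γ, x ^ p ^ k = 1) → Finite Γ)
    (hdrop : ∀ (g : Γ) (k : ℕ),
      rgProP p (Γ ⧸ Subgroup.normalClosure {g ^ p ^ k}) ≥ rgProP p Γ - 1 / (p ^ k : ℝ)) :
    rgProP p Γ = 0 := by
  haveI := Fact.mk hp
  haveI : Infinite Γ := hji.1
  by_contra hne
  have hpos : 0 < rgProP p Γ := (rgProP_nonneg p Γ).lt_of_ne (Ne.symm hne)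
  have h1p : (1 / (p : ℝ)) < 1 := by
    rw [div_lt_one (by exact_mod_cast hp.pos)]
    exact_mod_cast hp.one_lt
  obtain ⟨k, hk⟩ := exists_pow_lt_of_lt_one hpos h1p
  have hk' : 1 / ((p : ℝ) ^ k) < rgProP p Γ := by
    rwa [one_div, ← inv_pow, ← one_div]
  have hg : ∃ g : Γ, g ^ p ^ k ≠ 1 := by
    by_contra hall
    push_neg at hall
    haveI := hZelmanov k hall; exact not_finite Γ
  obtain ⟨g, hg⟩ := hg
  set H : Subgroup Γ := Subgroup.normalClosure {g ^ p ^ k} with hH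
  have hHbot : H ≠ ⊥ := by
    intro hbot
    apply hg
    have : g ^ p ^ k ∈ H := Subgroup.subset_normalClosure rfl
    rwa [hbot, Subgroup.mem_bot] at this
  have hHidx : H.index ≠ 0 := hji.2 H Subgroup.normalClosure_normal hHbot
  haveI : Finite (Γ ⧸ H) := Nat.finite_of_card_ne_zero hHidx
  obtain ⟨K, hKn, hKi, hKsub⟩ := key p hp (Γ ⧸ H)
  have hdim : dimH1 p K = 0 := by
    haveI := hKsub
    exact genNum_eq_zero_of_subsingleton _
  have hquot : rgProP p (Γ ⧸ H) ≤ 0 := by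
    have hb : BddBelow (Set.range fun N : {N : Subgroup (Γ ⧸ H) //
        N.Normal ∧ ∃ k : ℕ, N.index = p ^ k} =>
        (dimH1 p N.1 : ℝ) / (N.1.index : ℝ)) := by
      refine ⟨0, ?_⟩
      rintro _ ⟨N, rfl⟩
      exact div_nonneg (Nat.cast_nonneg _) (Nat.cast_nonneg _)
    have := ciInf_le hb (⟨K, hKn, hKi⟩ : {N : Subgroup (Γ ⧸ H) //
        N.Normal ∧ ∃ k : ℕ, N.index = p ^ k})
    simpa [rgProP, hdim] using this
  have hdrop' := hdrop g k
  linarith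
end
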